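/- arXiv:1111.3508 — 2 statements merged into one kernel-verified Lean document; each statement's English description precedes it below -/
import Mathlib

section
/- Let k have characteristic zero, ψ_n(h) = ∏_{m=1}^n (h-(m-1)) ∈ k[h], and (s.q)(h) = q(-h-2). A polynomial q ∈ k[h] satisfies (s.ψ_n)·q = ψ_n·(s.q) if and only if ψ_n divides q and the quotient p = q/ψ_n satisfies s.p = p. -/
open Polynomial Finset

/-- The translated reflection action `(s.q)(h) = q(-h-2)` on `k[h]`. -/
noncomputable def sdot {k : Type*} [CommRing k] (q : k[X]) : k[X] :=
  q.comp (-X - 2)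

/-- `ψ_n(h) = ∏_{m=1}^n (h - (m-1)) = ∏_{m=0}^{n-1} (h - m)`. -/
noncomputable def psi (k : Type*) [CommRing k] (n : ℕ) : k[X] :=
  ∏ m ∈ Finset.range n, (X - C (m : k))

/-- Coprimality gives `a ∣ q`; then `a * σ a` cancels from both sides. -/
theorem RingHom.map_mul_eq_mul_map_iff_of_isCoprime {R : Type*} [CommRing R] [IsDomain R]
    (σ : R →+* R) {a q : R} (ha : IsCoprime a (σ a)) :
    σ a * q = a * σ q ↔ ∃ p, q = a * p ∧ σ p = p := by
  constructor
  · intro h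
    obtain ⟨p, rfl⟩ : a ∣ q := ha.dvd_of_dvd_mul_left ⟨σ q, h⟩
    have ha0 : a ≠ 0 := by
      rintro rfl
      exact not_isCoprime_zero_zero (by simpa using ha)
    have hσa0 : σ a ≠ 0 := by
      intro h0
      rw [h0, isCoprime_zero_right] at ha
      exact (ha.map σ).ne_zero h0
    refine ⟨p, rfl, mul_left_cancel₀ (mul_ne_zero ha0 hσa0) ?_⟩
    rw [map_mul] at h
    linear_combination -h
  · rintro ⟨p, rfl, hp⟩
    rw [map_mul, hp]
    ring

lemma compRingHom_apply_eq_sdot {k : Type*} [CommRing k] (q : k[X]) :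
    compRingHom (-X - 2) q = sdot q :=
  coe_compRingHom_apply q _

lemma sdot_X_sub_C {k : Type*} [CommRing k] (a : k) : sdot (X - C a) = -(X - C (-2 - a)) := by
  simp only [sdot, sub_comp, X_comp, C_comp, map_sub, map_neg, C_ofNat]
  ring

/-- The roots of `ψ_n` are `0, …, n-1` and those of `s.ψ_n` are `-2, …, -n-1`. -/
lemma psi_isCoprime_sdot (k : Type*) [Field k] [CharZero k] (n : ℕ) :
    IsCoprime (psi k n) (sdot (psi k n)) := by
  rw [psi, sdot, Polynomial.prod_comp]
  refine IsCoprime.prod_left fun i _ => IsCoprime.prod_right fun j _ => ?_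
  rw [← sdot, sdot_X_sub_C]
  refine (isCoprime_X_sub_C_of_isUnit_sub (isUnit_iff_ne_zero.mpr ?_)).neg_right
  have hcast : (i : k) - (-2 - j) = ((i + j + 2 : ℕ) : k) := by push_cast; ring
  rw [hcast]
  exact Nat.cast_ne_zero.mpr (Nat.succ_ne_zero _)

theorem sdot_fixed_iff_general (k : Type*) [Field k] [CharZero k] (n : ℕ) (q : k[X]) :
    sdot (psi k n) * q = psi k n * sdot q ↔
      ∃ p : k[X], q = psi k n * p ∧ sdot p = p := by
  have key := (compRingHom (-X - 2)).map_mul_eq_mul_map_iff_of_isCoprime (a := psi k n) (q := q)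
  simp only [compRingHom_apply_eq_sdot] at key
  exact key (psi_isCoprime_sdot k n)

/-- `q` satisfies `(s.ψ_n)·q = ψ_n·(s.q)` iff `ψ_n ∣ q` and the quotient
`p = q/ψ_n` is `s.`-invariant. -/
theorem sdot_fixed_iff (k : Type*) [Field k] [IsAlgClosed k] [CharZero k] (n : ℕ) (q : k[X]) :
    sdot (psi k n) * q = psi k n * sdot q ↔
      ∃ p : k[X], q = psi k n * p ∧ sdot p = p :=
  sdot_fixed_iff_general k n q
end

section
/- Let k have characteristic zero and q ∈ k[h] satisfy q(-h-2) = -((h+2)/h)·q(h) in the sense that h·q(-h-2) = -(h+2)·q(h). Then h divides q, and p := q/h satisfies p(-h-2) = p(h). -/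
open Polynomial

theorem X_dvd_of_X_dvd_X_add_C_mul {R : Type*} [CommRing R] [IsDomain R] {c : R} (hc : c ≠ 0)
    {q : R[X]} (h : X ∣ (X + C c) * q) : X ∣ q :=
  (prime_X.dvd_or_dvd h).resolve_left (by simpa [X_dvd_iff] using hc)

/-- if `h·q(-h-2) = -(h+2)·q(h)` then `h ∣ q` and `p := q/h` satisfies
`p(-h-2) = p(h)`. -/
theorem divisible_and_invariant (k : Type*) [Field k] [CharZero k] (q : k[X])
    (hq : X * q.comp (-X - 2) = -(X + 2) * q) :
    ∃ p : k[X], q = X * p ∧ p.comp (-X - 2) = p := by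
  obtain ⟨p, rfl⟩ : X ∣ q :=
    X_dvd_of_X_dvd_X_add_C_mul (c := (2 : k)) two_ne_zero
      ⟨-q.comp (-X - 2), by rw [C_ofNat]; linear_combination hq⟩
  refine ⟨p, rfl, ?_⟩
  have hX2 : (X * (X + 2) : k[X]) ≠ 0 :=
    mul_ne_zero X_ne_zero (by rw [← C_ofNat]; exact X_add_C_ne_zero 2)
  rw [mul_comp, X_comp] at hq
  exact mul_left_cancel₀ hX2 (by linear_combination -hq)
end
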